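/- arXiv:1310.3153 — 9 statements merged into one kernel-verified Lean document; each statement's English description precedes it below -/
import Mathlib

section
/- Consider n agents with bids b_i : 2^M → ℝ≥0 that are XOS and monotone, and let (X_1,...,X_n) be a partition of M maximizing Σ_i b_i(X_i). Define agent i's VCG payment for a bundle S as p_i(S) = b_{-i}(M) - b_{-i}(M \ S), where b_{-i}(T) = max over partitions (Z_k)_{k≠i} of T of Σ_{k≠i} b_k(Z_k). Then for every partition (Q_1,...,Q_n) of M: Σ_{i=1}^n [p_i(Q_i) - p_i(X_i)] ≤ Σ_{i=1}^n b_i(X_i). -/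
/-- An XOS set function: a pointwise maximum of finitely many nonnegative additive
set functions. -/
def IsXOS {ι : Type*} (b : Finset ι → ℝ) : Prop :=
  ∃ (A : Finset (ι → ℝ)) (hA : A.Nonempty),
    (∀ a ∈ A, ∀ j, 0 ≤ a j) ∧
    ∀ S : Finset ι, b S = A.sup' hA (fun a => ∑ j ∈ S, a j)

/-- The bundle of agent `i` in the allocation encoded by the assignment `g`. -/
def part {n : ℕ} {ι : Type*} [Fintype ι] [DecidableEq ι]
    (g : ι → Fin n) (i : Fin n) : Finset ι :=
  Finset.univ.filter (fun j => g j = i)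

/-- `b_{-i}(T)`: the maximum total bid value achievable by allocating the items of
`T` among the agents other than `i`. -/
noncomputable def othersWelfare {n : ℕ} {ι : Type*} [Fintype ι] [DecidableEq ι]
    (b : Fin n → Finset ι → ℝ) (i : Fin n) (T : Finset ι) : ℝ :=
  (Finset.univ : Finset (ι → Fin n)).sup'
    (Finset.univ_nonempty_iff.mpr ⟨fun _ => i⟩)
    (fun g => ∑ k ∈ Finset.univ.erase i, b k (T.filter (fun j => g j = k)))

/-- The VCG payment of agent `i` for bundle `S` given the bids `b` of all agents
(only the bids of agents other than `i` matter). -/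
noncomputable def vcgPrice {n : ℕ} {ι : Type*} [Fintype ι] [DecidableEq ι]
    (b : Fin n → Finset ι → ℝ) (i : Fin n) (S : Finset ι) : ℝ :=
  othersWelfare b i Finset.univ - othersWelfare b i (Finset.univ \ S)

/-!
`p_i(Q_i) - p_i(X_i) = b_{-i}(M \ X_i) - b_{-i}(M \ Q_i)`. Efficiency of `X` bounds the first
term by `Σ_{k≠i} b_k(X_k)`, and giving each `X_k \ Q_i` to `k` bounds the second from below by
`Σ_{k≠i} b_k(X_k \ Q_i)`. Each loss `b_k(X_k) - b_k(X_k \ Q_i)` is at most `a_k(X_k ∩ Q_i)`,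
where `a_k` is the XOS clause attaining `b_k(X_k)`. Summing over `i` and `k` and using that the
`Q_i` partition `M` gives at most `Σ_k a_k(X_k) = Σ_k b_k(X_k)`.
-/

open Finset

theorem IsXOS.exists_supporting {ι : Type*} {b : Finset ι → ℝ} (hb : IsXOS b) (S : Finset ι) :
    ∃ a : ι → ℝ, (∀ j, 0 ≤ a j) ∧ (∀ T, ∑ j ∈ T, a j ≤ b T) ∧ b S = ∑ j ∈ S, a j := by
  obtain ⟨A, hA, hA_nonneg, hbA⟩ := hb
  obtain ⟨a, haA, ha⟩ := exists_mem_eq_sup' hA fun a => ∑ j ∈ S, a j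
  refine ⟨a, hA_nonneg a haA, fun T => ?_, by rw [hbA, ha]⟩
  rw [hbA]
  exact le_sup' (fun a => ∑ j ∈ T, a j) haA

theorem sub_sdiff_le_sum_inter_of_supporting {ι : Type*} [DecidableEq ι] {b : Finset ι → ℝ}
    {a : ι → ℝ} {S : Finset ι} (hle : ∀ T, ∑ j ∈ T, a j ≤ b T) (heq : b S = ∑ j ∈ S, a j)
    (T : Finset ι) : b S - b (S \ T) ≤ ∑ j ∈ S ∩ T, a j := by
  have hsplit := sum_inter_add_sum_sdiff S T a
  linarith [hle (S \ T)]

section Allocation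

variable {n : ℕ} {ι : Type*} [Fintype ι] [DecidableEq ι]

theorem filter_compl_eq_part_sdiff (g : ι → Fin n) (S : Finset ι) (k : Fin n) :
    (univ \ S).filter (fun j => g j = k) = part g k \ S := by
  ext j
  simp only [part, mem_filter, mem_sdiff, mem_univ, true_and]
  tauto

theorem sum_sum_inter_part {M : Type*} [AddCommMonoid M] (S : Finset ι) (q : ι → Fin n)
    (f : ι → M) : ∑ i, ∑ j ∈ S ∩ part q i, f j = ∑ j ∈ S, f j := by
  have hinter : ∀ i, S ∩ part q i = S.filter (fun j => q j = i) := fun i => by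
    ext j
    simp only [part, mem_inter, mem_filter, mem_univ, true_and]
  simp only [hinter]
  exact sum_fiberwise S q f

theorem le_othersWelfare (b : Fin n → Finset ι → ℝ) (i : Fin n) (T : Finset ι)
    (g : ι → Fin n) :
    ∑ k ∈ univ.erase i, b k (T.filter (fun j => g j = k)) ≤ othersWelfare b i T :=
  le_sup' (fun g : ι → Fin n => ∑ k ∈ univ.erase i, b k (T.filter (fun j => g j = k)))
    (mem_univ g)

theorem sum_sdiff_le_othersWelfare (b : Fin n → Finset ι → ℝ) (i : Fin n) (x : ι → Fin n)
    (S : Finset ι) :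
    ∑ k ∈ univ.erase i, b k (part x k \ S) ≤ othersWelfare b i (univ \ S) := by
  simpa only [filter_compl_eq_part_sdiff] using le_othersWelfare b i (univ \ S) x

/-- Giving `X_i` back to agent `i` turns any allocation of `M \ X_i` among the others into an
allocation of `M`, whose welfare is at most that of the efficient allocation `x`. -/
theorem othersWelfare_compl_part_le_of_efficient {b : Fin n → Finset ι → ℝ}
    (hmono : ∀ i, ∀ S T : Finset ι, S ⊆ T → b i S ≤ b i T) {x : ι → Fin n}
    (hx : ∀ g : ι → Fin n, ∑ i, b i (part g i) ≤ ∑ i, b i (part x i)) (i : Fin n) :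
    othersWelfare b i (univ \ part x i) ≤ ∑ k ∈ univ.erase i, b k (part x k) := by
  refine sup'_le _ _ fun g _ => ?_
  set g' : ι → Fin n := fun j => if x j = i then i else g j
  have hsub : part x i ⊆ part g' i := fun j hj => by
    simp only [part, mem_filter, mem_univ, true_and] at hj ⊢
    simp [g', hj]
  have hothers : ∀ k ∈ univ.erase i,
      b k ((univ \ part x i).filter (fun j => g j = k)) = b k (part g' k) := fun k hk => by
    congr 1
    ext j
    simp only [part, mem_filter, mem_sdiff, mem_univ, true_and]
    by_cases h : x j = i <;> simp [g', h, Ne.symm (ne_of_mem_erase hk)]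
  rw [sum_congr rfl hothers]
  have hg' := sum_erase_add univ (fun k => b k (part g' k)) (mem_univ i)
  have hx' := sum_erase_add univ (fun k => b k (part x k)) (mem_univ i)
  linarith [hmono i _ _ hsub, hx g']

end Allocation

theorem vcg_price_difference_bound_general {n : ℕ} {ι : Type*} [Fintype ι] [DecidableEq ι]
    (b : Fin n → Finset ι → ℝ)
    (hXOS : ∀ i, IsXOS (b i))
    (hmono : ∀ i, ∀ S T : Finset ι, S ⊆ T → b i S ≤ b i T)
    (x : ι → Fin n)
    (hx : ∀ g : ι → Fin n, ∑ i, b i (part g i) ≤ ∑ i, b i (part x i))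
    (q : ι → Fin n) :
    ∑ i, (vcgPrice b i (part q i) - vcgPrice b i (part x i)) ≤
      ∑ i, b i (part x i) := by
  choose a ha_nonneg ha_le ha_eq using fun k => (hXOS k).exists_supporting (part x k)
  calc ∑ i, (vcgPrice b i (part q i) - vcgPrice b i (part x i))
      ≤ ∑ i, ∑ k ∈ univ.erase i, (b k (part x k) - b k (part x k \ part q i)) := by
        gcongr with i
        rw [vcgPrice, vcgPrice, sum_sub_distrib]
        linarith [othersWelfare_compl_part_le_of_efficient hmono hx i,
          sum_sdiff_le_othersWelfare b i x (part q i)]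
    _ ≤ ∑ i, ∑ k, ∑ j ∈ part x k ∩ part q i, a k j := by
        refine sum_le_sum fun i _ => (sum_le_sum fun k _ =>
          sub_sdiff_le_sum_inter_of_supporting (ha_le k) (ha_eq k) _).trans ?_
        exact sum_le_sum_of_subset_of_nonneg (erase_subset i univ) fun k _ _ =>
          sum_nonneg fun j _ => ha_nonneg k j
    _ = ∑ k, b k (part x k) := by
        rw [sum_comm]
        simp only [sum_sum_inter_part, ha_eq]

/-- For XOS, monotone, normalized, nonnegative bids and a
bid-maximizing allocation `(X_1,…,X_n)` (encoded by `x`), for every partition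
`(Q_1,…,Q_n)` (encoded by `q`):
`Σ_i [p_i(Q_i) - p_i(X_i)] ≤ Σ_i b_i(X_i)`. -/
theorem vcg_price_difference_bound {n : ℕ} {ι : Type*} [Fintype ι] [DecidableEq ι]
    (hn : 2 ≤ n) (b : Fin n → Finset ι → ℝ)
    (hXOS : ∀ i, IsXOS (b i))
    (hmono : ∀ i, ∀ S T : Finset ι, S ⊆ T → b i S ≤ b i T)
    (hnorm : ∀ i, b i ∅ = 0)
    (hnn : ∀ i S, 0 ≤ b i S)
    (x : ι → Fin n)
    (hx : ∀ g : ι → Fin n, ∑ i, b i (part g i) ≤ ∑ i, b i (part x i))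
    (q : ι → Fin n) :
    ∑ i, (vcgPrice b i (part q i) - vcgPrice b i (part x i)) ≤
      ∑ i, b i (part x i) :=
  vcg_price_difference_bound_general b hXOS hmono x hx q
end

section
/- Let v_i : 2^M → ℝ≥0 be β-fractionally subadditive for β ≥ 1, and consider the VCG mechanism on XOS bids. Then for every bundle Q_i ⊆ M there exists a conservative additive bid a_i (i.e., Σ_{j∈S} a_i(j) ≤ v_i(S) for all S ⊆ M) such that for all monotone normalized bids b_{-i} of the other agents: v_i(X_i) - p_i(X_i, b_{-i}) ≥ v_i(Q_i)/β - p_i(Q_i, b_{-i}), where X_i is the bundle agent i receives in an efficient allocation for bids (a_i, b_{-i}) and p_i(S, b_{-i}) = b_{-i}(M) - b_{-i}(M \ S). -/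
/-!
β-fractional subadditivity gives an additive `a` with `v Q / β ≤ a(Q)` that is dominated by `v`
on subsets of `Q`. Bid `a` on the items of `Q` and zero elsewhere: by monotonicity of `v` this bid
is conservative on every bundle. Comparing the efficient bundle `X` with `Q` under this bid gives
`a(Q) + b₋ᵢ(M \ Q) ≤ a(X) + b₋ᵢ(M \ X)`, and then `v Q / β ≤ a(Q)` and `a(X) ≤ v X` finish.
-/

open Finset

theorem sum_ite_mem_le_of_forall_subset {ι : Type*} [DecidableEq ι] {v : Finset ι → ℝ}
    (hv : Monotone v) {T : Finset ι} {a : ι → ℝ} (ha : ∀ S ⊆ T, ∑ j ∈ S, a j ≤ v S)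
    (S : Finset ι) : ∑ j ∈ S, (if j ∈ T then a j else 0) ≤ v S := by
  rw [sum_ite_mem]
  exact (ha _ inter_subset_right).trans (hv inter_subset_left)

theorem beta_xos_deviation_general {ι : Type*} [Fintype ι] [DecidableEq ι]
    (β : ℝ)
    (v : Finset ι → ℝ)
    (hvmono : ∀ S T : Finset ι, S ⊆ T → v S ≤ v T)
    (hβXOS : ∀ T : Finset ι, ∃ a : ι → ℝ,
      v T / β ≤ ∑ j ∈ T, a j ∧ ∀ S ⊆ T, ∑ j ∈ S, a j ≤ v S)
    (Q : Finset ι) :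
    ∃ a : ι → ℝ,
      (∀ S : Finset ι, ∑ j ∈ S, a j ≤ v S) ∧
      ∀ bm : Finset ι → ℝ,
        (∀ S T : Finset ι, S ⊆ T → bm S ≤ bm T) → bm ∅ = 0 →
        ∀ X : Finset ι,
          (∀ S : Finset ι,
            (∑ j ∈ S, a j) + bm (Finset.univ \ S) ≤
              (∑ j ∈ X, a j) + bm (Finset.univ \ X)) →
          v Q / β - (bm Finset.univ - bm (Finset.univ \ Q)) ≤
            v X - (bm Finset.univ - bm (Finset.univ \ X)) := by
  obtain ⟨a, hQ, hsupport⟩ := hβXOS Q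
  have hconservative :=
    sum_ite_mem_le_of_forall_subset (fun S T h => hvmono S T h) hsupport
  refine ⟨fun j => if j ∈ Q then a j else 0, hconservative, fun bm _ _ X hX => ?_⟩
  have hbidQ : ∑ j ∈ Q, (if j ∈ Q then a j else 0) = ∑ j ∈ Q, a j :=
    sum_congr rfl fun j hj => if_pos hj
  have hefficient := hX Q
  linarith [hconservative X]

/-- Deviation lemma for β-fractionally subadditive valuations. For every
bundle `Q` there is a conservative additive bid `a` such that against any monotone
normalized aggregate `b_{-i}` (given as a set function `bm`, with VCG payment
`p(S) = bm M - bm (M \ S)`), every bundle `X` that is efficient for `(a, b_{-i})`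
satisfies `v X - p X ≥ v Q / β - p Q`. -/
theorem beta_xos_deviation {ι : Type*} [Fintype ι] [DecidableEq ι]
    (β : ℝ) (hβ : 1 ≤ β)
    (v : Finset ι → ℝ) (hnn : ∀ S, 0 ≤ v S)
    (hvmono : ∀ S T : Finset ι, S ⊆ T → v S ≤ v T)
    (hβXOS : ∀ T : Finset ι, ∃ a : ι → ℝ,
      v T / β ≤ ∑ j ∈ T, a j ∧ ∀ S ⊆ T, ∑ j ∈ S, a j ≤ v S)
    (Q : Finset ι) :
    ∃ a : ι → ℝ,
      (∀ S : Finset ι, ∑ j ∈ S, a j ≤ v S) ∧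
      ∀ bm : Finset ι → ℝ,
        (∀ S T : Finset ι, S ⊆ T → bm S ≤ bm T) → bm ∅ = 0 →
        ∀ X : Finset ι,
          (∀ S : Finset ι,
            (∑ j ∈ S, a j) + bm (Finset.univ \ S) ≤
              (∑ j ∈ X, a j) + bm (Finset.univ \ X)) →
          v Q / β - (bm Finset.univ - bm (Finset.univ \ Q)) ≤
            v X - (bm Finset.univ - bm (Finset.univ \ X)) :=
  beta_xos_deviation_general β v hvmono hβXOS Q
end

section
/- Abstract smoothness-to-PoA theorem: Suppose a mechanism with utilities u_i(b, v_i) = v_i(X_i(b)) - p_i(b), nonnegative payments p_i(b), and conservative bids (b_i(X_i(b)) ≤ v_i(X_i(b)) and p_i(b) ≤ b_i(X_i(b))) is relaxed (λ, μ_1, μ_2)-smooth with λ, μ_1, μ_2 ≥ 0: for every distribution 𝓑 over bid profiles there exist deviations a_1,...,a_n with Σ_i E_{b_{-i}}[u_i((a_i,b_{-i}),v_i)] ≥ λ·OPT(v) - μ_1·Σ_i E_b[p_i(b)] - μ_2·Σ_i E_b[b_i(X_i(b))]. Then for every coarse correlated equilibrium 𝓑 (i.e., Σ over each agent: E_b[u_i(b,v_i)]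 ≥ E_{b_{-i}}[u_i((a'_i,b_{-i}),v_i)] for all fixed a'_i), the expected welfare satisfies E_b[Σ_i v_i(X_i(b))] ≥ λ/(max{μ_1,1} + μ_2) · OPT(v). -/
/-!
At a coarse correlated equilibrium no agent gains by a fixed deviation, so the deviation profile
supplied by smoothness earns at most the equilibrium utility `V - P`, where `V`, `P` and `B` are the
expected welfare, payments and bid values. Hence `λ·OPT ≤ V - P + μ₁P + μ₂B`, and conservativeness
`0 ≤ P ≤ B ≤ V` bounds the right-hand side by `(max μ₁ 1 + μ₂)·V`.
-/

theorem div_max_one_add_le_of_sub_le {L V P B mu1 mu2 : ℝ} (hP : 0 ≤ P) (hPB : P ≤ B)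
    (hBV : B ≤ V) (hmu2 : 0 ≤ mu2) (h : L - mu1 * P - mu2 * B ≤ V - P) :
    L / (max mu1 1 + mu2) ≤ V := by
  have hmax : 1 ≤ max mu1 1 := le_max_right mu1 1
  have hpay : (mu1 - 1) * P ≤ (max mu1 1 - 1) * V :=
    calc (mu1 - 1) * P ≤ (max mu1 1 - 1) * P :=
          mul_le_mul_of_nonneg_right (by linarith [le_max_left mu1 1]) hP
      _ ≤ (max mu1 1 - 1) * V := mul_le_mul_of_nonneg_left (hPB.trans hBV) (by linarith)
  have hbid : mu2 * B ≤ mu2 * V := mul_le_mul_of_nonneg_left hBV hmu2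
  rw [div_le_iff₀ (by linarith)]
  linarith

section WeightedSums

variable {ι β : Type*} [Fintype ι] [Fintype β] {w : β → ℝ}

theorem sum_sum_mul_le_sum_sum_mul (hw : ∀ b, 0 ≤ w b) {f g : ι → β → ℝ}
    (hfg : ∀ i b, f i b ≤ g i b) :
    ∑ i, ∑ b, w b * f i b ≤ ∑ i, ∑ b, w b * g i b := by
  gcongr with i _ b _
  · exact hw b
  · exact hfg i b

theorem sum_sum_mul_nonneg (hw : ∀ b, 0 ≤ w b) {f : ι → β → ℝ} (hf : ∀ i b, 0 ≤ f i b) :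
    0 ≤ ∑ i, ∑ b, w b * f i b :=
  Finset.sum_nonneg fun i _ => Finset.sum_nonneg fun b _ => mul_nonneg (hw b) (hf i b)

end WeightedSums

theorem smoothness_to_cce_poa_general {n : ℕ} (Bi : Fin n → Type*) [∀ i, Fintype (Bi i)]
    (vX p bidv : Fin n → (∀ i, Bi i) → ℝ)
    (OPT lam mu1 mu2 : ℝ)
    (hmu2 : 0 ≤ mu2)
    (hp : ∀ i b, 0 ≤ p i b)
    (hcons1 : ∀ i b, p i b ≤ bidv i b)
    (hcons2 : ∀ i b, bidv i b ≤ vX i b)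
    (hsmooth : ∀ w : (∀ i, Bi i) → ℝ, (∀ b, 0 ≤ w b) → ∑ b, w b = 1 →
      ∃ a : ∀ i, Bi i,
        lam * OPT - mu1 * (∑ i, ∑ b, w b * p i b)
            - mu2 * (∑ i, ∑ b, w b * bidv i b) ≤
          ∑ i, ∑ b, w b * (vX i (Function.update b i (a i))
            - p i (Function.update b i (a i))))
    (w : (∀ i, Bi i) → ℝ) (hw : ∀ b, 0 ≤ w b) (hw1 : ∑ b, w b = 1)
    (hCCE : ∀ (i : Fin n) (a' : Bi i),
      ∑ b, w b * (vX i (Function.update b i a') - p i (Function.update b i a')) ≤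
        ∑ b, w b * (vX i b - p i b)) :
    lam / (max mu1 1 + mu2) * OPT ≤ ∑ b, w b * ∑ i, vX i b := by
  obtain ⟨a, hsmooth_a⟩ := hsmooth w hw hw1
  have hdeviation := Finset.sum_le_sum fun i (_ : i ∈ Finset.univ) => hCCE i (a i)
  have hutility : ∑ i, ∑ b, w b * (vX i b - p i b) =
      ∑ i, ∑ b, w b * vX i b - ∑ i, ∑ b, w b * p i b := by
    simp only [mul_sub, Finset.sum_sub_distrib]
  have hwelfare : ∑ b, w b * ∑ i, vX i b = ∑ i, ∑ b, w b * vX i b := by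
    simp only [Finset.mul_sum]
    exact Finset.sum_comm
  rw [hwelfare, div_mul_eq_mul_div]
  exact div_max_one_add_le_of_sub_le (sum_sum_mul_nonneg hw hp)
    (sum_sum_mul_le_sum_sum_mul hw hcons1) (sum_sum_mul_le_sum_sum_mul hw hcons2) hmu2
    (by linarith)

/-- Abstract smoothness-to-PoA theorem. A mechanism with utilities
`u_i(b) = vX i b - p i b`, nonnegative payments and conservative bids
(`p i b ≤ bidv i b ≤ vX i b`) that is relaxed `(λ, μ₁, μ₂)`-smooth has expected
welfare at least `λ/(max μ₁ 1 + μ₂) · OPT` at every coarse correlated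
equilibrium. -/
theorem smoothness_to_cce_poa {n : ℕ} (Bi : Fin n → Type*) [∀ i, Fintype (Bi i)]
    (vX p bidv : Fin n → (∀ i, Bi i) → ℝ)
    (OPT lam mu1 mu2 : ℝ)
    (hOPT : 0 ≤ OPT) (hlam : 0 ≤ lam) (hmu1 : 0 ≤ mu1) (hmu2 : 0 ≤ mu2)
    (hp : ∀ i b, 0 ≤ p i b)
    (hcons1 : ∀ i b, p i b ≤ bidv i b)
    (hcons2 : ∀ i b, bidv i b ≤ vX i b)
    (hsmooth : ∀ w : (∀ i, Bi i) → ℝ, (∀ b, 0 ≤ w b) → ∑ b, w b = 1 →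
      ∃ a : ∀ i, Bi i,
        lam * OPT - mu1 * (∑ i, ∑ b, w b * p i b)
            - mu2 * (∑ i, ∑ b, w b * bidv i b) ≤
          ∑ i, ∑ b, w b * (vX i (Function.update b i (a i))
            - p i (Function.update b i (a i))))
    (w : (∀ i, Bi i) → ℝ) (hw : ∀ b, 0 ≤ w b) (hw1 : ∑ b, w b = 1)
    (hCCE : ∀ (i : Fin n) (a' : Bi i),
      ∑ b, w b * (vX i (Function.update b i a') - p i (Function.update b i a')) ≤
        ∑ b, w b * (vX i b - p i b)) :
    lam / (max mu1 1 + mu2) * OPT ≤ ∑ b, w b * ∑ i, vX i b :=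
  smoothness_to_cce_poa_general Bi vX p bidv OPT lam mu1 mu2 hmu2 hp hcons1 hcons2 hsmooth w hw hw1
    hCCE
end

section
/- Abstract smoothness-to-regret theorem: With the same hypotheses as the smoothness-to-PoA theorem, if (b^1,...,b^T) is a sequence of conservative bid profiles with vanishing average external regret, i.e., for each agent i, Σ_{t=1}^T u_i(b^t, v_i) ≥ max_{b'_i} Σ_{t=1}^T u_i((b'_i, b^t_{-i}), v_i) - R_i where R_i ≥ 0, then (1/T)·Σ_{t=1}^T SW(b^t) ≥ λ/(max{μ_1,1}+μ_2) · OPT(v) - (Σ_i R_i)/((max{μ_1,1}+μ_2)·T). -/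
/-! Summing each agent's regret inequality at its smoothness deviation `a i` bounds the average
deviation utility by the average utility plus `(Σ R_i)/T`. Combined with the smoothness
inequality this gives `λ·OPT - (Σ R_i)/T ≤ W - P + μ₁ P + μ₂ B` for the average welfare `W`,
payments `P` and bids `B`; conservativeness `0 ≤ P ≤ B ≤ W` turns the right side into
`(max μ₁ 1 + μ₂) W`. -/

open Finset Function

theorem sum_sum_update_sub_le_of_regret {ι τ : Type*} [Fintype ι] [DecidableEq ι] [Fintype τ]
    {B : ι → Type*} (u : ι → (∀ i, B i) → ℝ) (bs : τ → ∀ i, B i) (R : ι → ℝ) (a : ∀ i, B i)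
    (hregret : ∀ i, ∑ t, u i (update (bs t) i (a i)) - R i ≤ ∑ t, u i (bs t)) :
    ∑ t, ∑ i, u i (update (bs t) i (a i)) - ∑ i, R i ≤ ∑ t, ∑ i, u i (bs t) := by
  rw [sum_comm, sum_comm (f := fun t i => u i (bs t)), ← sum_sub_distrib]
  exact sum_le_sum fun i _ => hregret i

theorem le_of_smooth_of_regret {lam OPT mu1 mu2 P B W D r : ℝ} (hmu2 : 0 ≤ mu2)
    (hP : 0 ≤ P) (hPB : P ≤ B) (hBW : B ≤ W)
    (hsmooth : lam * OPT - mu1 * P - mu2 * B ≤ D) (hregret : D - r ≤ W - P) :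
    lam / (max mu1 1 + mu2) * OPT - r / (max mu1 1 + mu2) ≤ W := by
  have hm : 0 < max mu1 1 + mu2 := by linarith [le_max_right mu1 1]
  have hmu1P : mu1 * P ≤ max mu1 1 * P := mul_le_mul_of_nonneg_right (le_max_left _ _) hP
  have hbound : lam * OPT - r ≤ (max mu1 1 + mu2) * W := by
    nlinarith [le_max_right mu1 1, mul_le_mul_of_nonneg_left hBW hmu2]
  rw [div_mul_eq_mul_div, ← sub_div, div_le_iff₀ hm]
  linarith

theorem smoothness_to_regret_general {n : ℕ} (Bi : Fin n → Type*)
    (vX p bidv : Fin n → (∀ i, Bi i) → ℝ)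
    (OPT lam mu1 mu2 : ℝ)
    (hmu2 : 0 ≤ mu2)
    (hp : ∀ i b, 0 ≤ p i b)
    (hcons1 : ∀ i b, p i b ≤ bidv i b)
    (hcons2 : ∀ i b, bidv i b ≤ vX i b)
    (T : ℕ) (bs : Fin T → (∀ i, Bi i))
    (R : Fin n → ℝ)
    (hregret : ∀ (i : Fin n) (b' : Bi i),
      (∑ t, (vX i (Function.update (bs t) i b')
          - p i (Function.update (bs t) i b'))) - R i ≤
        ∑ t, (vX i (bs t) - p i (bs t)))
    (hsmooth : ∃ a : ∀ i, Bi i,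
      lam * OPT - mu1 * ((1 / (T : ℝ)) * ∑ t, ∑ i, p i (bs t))
          - mu2 * ((1 / (T : ℝ)) * ∑ t, ∑ i, bidv i (bs t)) ≤
        (1 / (T : ℝ)) * ∑ t, ∑ i, (vX i (Function.update (bs t) i (a i))
          - p i (Function.update (bs t) i (a i)))) :
    lam / (max mu1 1 + mu2) * OPT - (∑ i, R i) / ((max mu1 1 + mu2) * T) ≤
      (1 / (T : ℝ)) * ∑ t, ∑ i, vX i (bs t) := by
  obtain ⟨a, ha⟩ := hsmooth
  have hTinv : (0 : ℝ) ≤ 1 / T := by positivity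
  have hdev : (1 / (T : ℝ)) * ∑ t, ∑ i, (vX i (update (bs t) i (a i))
        - p i (update (bs t) i (a i))) - 1 / T * ∑ i, R i ≤
      1 / T * ∑ t, ∑ i, vX i (bs t) - 1 / T * ∑ t, ∑ i, p i (bs t) := by
    have := mul_le_mul_of_nonneg_left (sum_sum_update_sub_le_of_regret
      (fun i b => vX i b - p i b) bs R a fun i => hregret i (a i)) hTinv
    simpa only [sum_sub_distrib, mul_sub] using this
  have hP : 0 ≤ (1 / (T : ℝ)) * ∑ t, ∑ i, p i (bs t) :=
    mul_nonneg hTinv (sum_nonneg fun t _ => sum_nonneg fun i _ => hp i (bs t))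
  have hPB : (1 / (T : ℝ)) * ∑ t, ∑ i, p i (bs t) ≤ 1 / T * ∑ t, ∑ i, bidv i (bs t) := by
    gcongr with t _ i _
    exact hcons1 i (bs t)
  have hBW : (1 / (T : ℝ)) * ∑ t, ∑ i, bidv i (bs t) ≤ 1 / T * ∑ t, ∑ i, vX i (bs t) := by
    gcongr with t _ i _
    exact hcons2 i (bs t)
  convert le_of_smooth_of_regret hmu2 hP hPB hBW ha hdev using 2
  rw [div_mul_eq_div_div_swap, one_div_mul_eq_div]

/-- Abstract smoothness-to-regret theorem. Under the relaxed
smoothness inequality for the empirical distribution of a sequence of conservative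
bid profiles `bs` with external regrets `R i ≥ 0`, the average welfare is at least
`λ/(max μ₁ 1 + μ₂) · OPT - (Σ_i R_i)/((max μ₁ 1 + μ₂) · T)`. -/
theorem smoothness_to_regret {n : ℕ} (Bi : Fin n → Type*)
    (vX p bidv : Fin n → (∀ i, Bi i) → ℝ)
    (OPT lam mu1 mu2 : ℝ)
    (hOPT : 0 ≤ OPT) (hlam : 0 ≤ lam) (hmu1 : 0 ≤ mu1) (hmu2 : 0 ≤ mu2)
    (hp : ∀ i b, 0 ≤ p i b)
    (hcons1 : ∀ i b, p i b ≤ bidv i b)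
    (hcons2 : ∀ i b, bidv i b ≤ vX i b)
    (T : ℕ) (hT : 1 ≤ T) (bs : Fin T → (∀ i, Bi i))
    (R : Fin n → ℝ) (hR : ∀ i, 0 ≤ R i)
    (hregret : ∀ (i : Fin n) (b' : Bi i),
      (∑ t, (vX i (Function.update (bs t) i b')
          - p i (Function.update (bs t) i b'))) - R i ≤
        ∑ t, (vX i (bs t) - p i (bs t)))
    (hsmooth : ∃ a : ∀ i, Bi i,
      lam * OPT - mu1 * ((1 / (T : ℝ)) * ∑ t, ∑ i, p i (bs t))
          - mu2 * ((1 / (T : ℝ)) * ∑ t, ∑ i, bidv i (bs t)) ≤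
        (1 / (T : ℝ)) * ∑ t, ∑ i, (vX i (Function.update (bs t) i (a i))
          - p i (Function.update (bs t) i (a i)))) :
    lam / (max mu1 1 + mu2) * OPT - (∑ i, R i) / ((max mu1 1 + mu2) * T) ≤
      (1 / (T : ℝ)) * ∑ t, ∑ i, vX i (bs t) :=
  smoothness_to_regret_general Bi vX p bidv OPT lam mu1 mu2 hmu2 hp hcons1 hcons2 T bs R hregret
    hsmooth
end

section
/- Outcome closure implies equilibrium containment: Let B' ⊆ B be bid spaces and suppose a mechanism satisfies outcome closure, i.e., for every valuation profile v, agent i, conservative b'_{-i} ∈ B'_{-i}, and conservative b_i ∈ B_i, there exists a conservative b''_i ∈ B'_i with u_i((b''_i, b'_{-i}), v_i) ≥ u_i((b_i, b'_{-i}), v_i). Then every conservative pure Nash equilibrium of the mechanism restricted to B' is also a pure Nash equilibrium with respect to deviations in B; consequently the Price of Anarchy over pure Nash equilibria for B is at least that for B'. -/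
section Equilibria

variable {ι : Type*} {Bid : ι → Type*} (cons : ∀ i, Bid i → Prop)

def IsConservativeProfile (S : ∀ i, Set (Bid i)) (b : ∀ i, Bid i) : Prop :=
  ∀ k, b k ∈ S k ∧ cons k (b k)

variable {cons} in
theorem IsConservativeProfile.mono {S T : ∀ i, Set (Bid i)} (hST : ∀ i, S i ⊆ T i)
    {b : ∀ i, Bid i} (hb : IsConservativeProfile cons S b) : IsConservativeProfile cons T b :=
  fun k => ⟨hST k (hb k).1, (hb k).2⟩

variable [DecidableEq ι] {α : Type*} [Preorder α] (u : ι → (∀ i, Bid i) → α)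

def IsPureNash (S : ∀ i, Set (Bid i)) (b : ∀ i, Bid i) : Prop :=
  ∀ i, ∀ c ∈ S i, cons i c → u i (Function.update b i c) ≤ u i b

def OutcomeClosure (B B' : ∀ i, Set (Bid i)) : Prop :=
  ∀ i b', IsConservativeProfile cons B' b' → ∀ bi ∈ B i, cons i bi →
    ∃ b'' ∈ B' i, cons i b'' ∧ u i (Function.update b' i bi) ≤ u i (Function.update b' i b'')

variable {cons u}

theorem IsPureNash.of_outcomeClosure {B B' : ∀ i, Set (Bid i)}
    (hclose : OutcomeClosure cons u B B') {b : ∀ i, Bid i} (hb : IsConservativeProfile cons B' b) (hne : IsPureNash cons u B' b) :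
    IsPureNash cons u B b := by
  intro i c hc hcons
  obtain ⟨b'', hb''B', hb''cons, hle⟩ := hclose i b hb c hc hcons
  exact hle.trans (hne i b'' hb''B' hb''cons)

variable (cons u)

/-- With `W b = OPT / SW b`, the supremum of this set is the Price of Anarchy over `S`. -/
def pureNashValues {β : Type*} (S : ∀ i, Set (Bid i)) (W : (∀ i, Bid i) → β) : Set β :=
  {r | ∃ b, IsConservativeProfile cons S b ∧ IsPureNash cons u S b ∧ r = W b}

variable {cons u}

theorem pureNashValues_subset_of_outcomeClosure {β : Type*} {B B' : ∀ i, Set (Bid i)}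
    (hBB : ∀ i, B' i ⊆ B i) (hclose : OutcomeClosure cons u B B') (W : (∀ i, Bid i) → β) :
    pureNashValues cons u B' W ⊆ pureNashValues cons u B W := by
  rintro r ⟨b, hb, hne, rfl⟩
  exact ⟨b, hb.mono hBB, hne.of_outcomeClosure hclose hb, rfl⟩

end Equilibria

/-- Outcome closure implies equilibrium containment. If a mechanism
satisfies outcome closure for the restriction from bid spaces `B` to `B' ⊆ B`, then
every conservative pure Nash equilibrium w.r.t. `B'` is also a pure Nash
equilibrium w.r.t. deviations in `B`; consequently the Price of Anarchy (the
supremum of `OPT / SW b` over pure Nash equilibria) for `B` is at least that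
for `B'`. -/
theorem outcome_closure_equilibria {n : ℕ} (Bid : Fin n → Type*)
    (B B' : ∀ i, Set (Bid i)) (hBB : ∀ i, B' i ⊆ B i)
    (cons : ∀ i, Bid i → Prop)
    (u : Fin n → (∀ i, Bid i) → ℝ)
    (hclose : ∀ (i : Fin n) (b' : ∀ k, Bid k),
      (∀ k, b' k ∈ B' k ∧ cons k (b' k)) →
      ∀ bi ∈ B i, cons i bi →
        ∃ b'' ∈ B' i, cons i b'' ∧
          u i (Function.update b' i bi) ≤ u i (Function.update b' i b''))
    (SW : (∀ i, Bid i) → ℝ) (OPT : ℝ) :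
    (∀ b : ∀ i, Bid i,
      (∀ k, b k ∈ B' k ∧ cons k (b k)) →
      (∀ i, ∀ c ∈ B' i, cons i c → u i (Function.update b i c) ≤ u i b) →
      (∀ i, ∀ c ∈ B i, cons i c → u i (Function.update b i c) ≤ u i b)) ∧
    (BddAbove {r : ℝ | ∃ b : ∀ i, Bid i,
        (∀ k, b k ∈ B k ∧ cons k (b k)) ∧
        (∀ i, ∀ c ∈ B i, cons i c → u i (Function.update b i c) ≤ u i b) ∧
        r = OPT / SW b} →
      {r : ℝ | ∃ b : ∀ i, Bid i,
        (∀ k, b k ∈ B' k ∧ cons k (b k)) ∧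
        (∀ i, ∀ c ∈ B' i, cons i c → u i (Function.update b i c) ≤ u i b) ∧
        r = OPT / SW b}.Nonempty →
      sSup {r : ℝ | ∃ b : ∀ i, Bid i,
        (∀ k, b k ∈ B' k ∧ cons k (b k)) ∧
        (∀ i, ∀ c ∈ B' i, cons i c → u i (Function.update b i c) ≤ u i b) ∧
        r = OPT / SW b} ≤
      sSup {r : ℝ | ∃ b : ∀ i, Bid i,
        (∀ k, b k ∈ B k ∧ cons k (b k)) ∧
        (∀ i, ∀ c ∈ B i, cons i c → u i (Function.update b i c) ≤ u i b) ∧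
        r = OPT / SW b}) := by
  have hclosure : OutcomeClosure cons u B B' := hclose
  exact ⟨fun b hb hne => IsPureNash.of_outcomeClosure hclosure hb hne, fun hbdd hne =>
    csSup_le_csSup hbdd hne (pureNashValues_subset_of_outcomeClosure hBB hclosure (OPT / SW ·))⟩
end

section
/- The VCG mechanism satisfies outcome closure for the restriction from XOS bids to additive bids: for every agent i with bid b_i ∈ XOS and any bids b'_{-i} of the other agents, letting X_i be agent i's bundle under (b_i, b'_{-i}), there exists a conservative additive bid b''_i (with b''_i(j) = 0 for j ∉ X_i, Σ_{j∈X_i} b''_i(j) = b_i(X_i), and Σ_{j∈S} b''_i(j) ≤ b_i(S) for all S ⊆ X_i) such that under bids (b''_i, b'_{-i}) the VCG mechanism can assign agent i the same bundle X_i at the same payment, and agent i's reported utility for every other bundle T under b''_i is no higher than under b_i. -/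
/-!
At the bundle `X` the XOS bid is attained by one of its additive clauses `a`, which lies below
the bid everywhere. Cutting `a` down to `X` keeps its value on `X` and, `a` being nonnegative,
keeps it below the bid. An additive bid that lies below `b` and agrees with it at `X` cannot make
any bundle more attractive than `X`, because the prices do not depend on agent `i`'s bid.
-/

open Finset

theorem forall_sub_le_sub_of_le_of_eq {α β : Type*} [AddCommGroup β] [PartialOrder β]
    [IsOrderedAddMonoid β] {f g p : α → β} {x : α} (hfg : ∀ t, f t ≤ g t) (hx : f x = g x)
    (hmax : ∀ t, g t - p t ≤ g x - p x) (t : α) : f t - p t ≤ f x - p x :=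
  calc f t - p t ≤ g t - p t := sub_le_sub_right (hfg t) _
    _ ≤ g x - p x := hmax t
    _ = f x - p x := by rw [hx]

theorem exists_mem_sum_eq_and_forall_sum_le_of_eq_sup' {ι β : Type*} [AddCommMonoid β]
    [LinearOrder β] {A : Finset (ι → β)} (hA : A.Nonempty) {b : Finset ι → β}
    (hb : ∀ S, b S = A.sup' hA fun a => ∑ j ∈ S, a j) (X : Finset ι) :
    ∃ a ∈ A, ∑ j ∈ X, a j = b X ∧ ∀ T, ∑ j ∈ T, a j ≤ b T := by
  obtain ⟨a, haA, ha⟩ := A.exists_mem_eq_sup' hA fun a => ∑ j ∈ X, a j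
  exact ⟨a, haA, by rw [hb, ha], fun T => hb T ▸ le_sup' (fun a => ∑ j ∈ T, a j) haA⟩

theorem sum_indicator_self {ι β : Type*} [AddCommMonoid β] (X : Finset ι) (a : ι → β) :
    ∑ j ∈ X, (X : Set ι).indicator a j = ∑ j ∈ X, a j :=
  sum_congr rfl fun _ hj => Set.indicator_of_mem (mem_coe.2 hj) a

theorem sum_indicator_le_sum_of_nonneg {ι β : Type*} [AddCommMonoid β] [PartialOrder β]
    [IsOrderedAddMonoid β] {a : ι → β} (ha : ∀ j, 0 ≤ a j) (X T : Finset ι) :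
    ∑ j ∈ T, (X : Set ι).indicator a j ≤ ∑ j ∈ T, a j :=
  sum_le_sum fun j _ => Set.indicator_le_self' (fun j _ => ha j) j

theorem vcg_outcome_closure_xos_to_additive_general {ι : Type*}
    (b : Finset ι → ℝ)
    (hXOS : ∃ (A : Finset (ι → ℝ)) (hA : A.Nonempty),
      (∀ a ∈ A, ∀ j, 0 ≤ a j) ∧
      ∀ S : Finset ι, b S = A.sup' hA (fun a => ∑ j ∈ S, a j))
    (p : Finset ι → ℝ) (X : Finset ι)
    (hmax : ∀ T : Finset ι, b T - p T ≤ b X - p X) :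
    ∃ a : ι → ℝ,
      (∀ j ∉ X, a j = 0) ∧
      (∑ j ∈ X, a j = b X) ∧
      (∀ S ⊆ X, ∑ j ∈ S, a j ≤ b S) ∧
      (∀ T : Finset ι, ∑ j ∈ T, a j ≤ b T) ∧
      (∀ T : Finset ι, (∑ j ∈ T, a j) - p T ≤ (∑ j ∈ X, a j) - p X) := by
  obtain ⟨A, hA, hnonneg, hb⟩ := hXOS
  obtain ⟨a, haA, haX, hab⟩ := exists_mem_sum_eq_and_forall_sum_le_of_eq_sup' hA hb X
  have htight : ∑ j ∈ X, (X : Set ι).indicator a j = b X := (sum_indicator_self X a).trans haX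
  have hle : ∀ T, ∑ j ∈ T, (X : Set ι).indicator a j ≤ b T := fun T =>
    (sum_indicator_le_sum_of_nonneg (hnonneg a haA) X T).trans (hab T)
  exact ⟨(X : Set ι).indicator a, fun j hj => Set.indicator_of_notMem (mt mem_coe.1 hj) a,
    htight, fun S _ => hle S, hle, forall_sub_le_sub_of_le_of_eq hle htight hmax⟩

/-- VCG satisfies outcome closure for the restriction from XOS bids
to additive bids. Given an XOS bid `b`, prices `p` (independent of agent `i`'s
bid) and a bundle `X` maximizing `b T - p T`, there is a conservative additive
bid `a` supported on `X`, tight on `X`, below `b` everywhere, under which `X`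
still maximizes the reported utility (hence the same bundle at the same payment
can be assigned). -/
theorem vcg_outcome_closure_xos_to_additive {ι : Type*} [Fintype ι] [DecidableEq ι]
    (b : Finset ι → ℝ)
    (hXOS : ∃ (A : Finset (ι → ℝ)) (hA : A.Nonempty),
      (∀ a ∈ A, ∀ j, 0 ≤ a j) ∧
      ∀ S : Finset ι, b S = A.sup' hA (fun a => ∑ j ∈ S, a j))
    (p : Finset ι → ℝ) (X : Finset ι)
    (hmax : ∀ T : Finset ι, b T - p T ≤ b X - p X) :
    ∃ a : ι → ℝ,
      (∀ j ∉ X, a j = 0) ∧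
      (∑ j ∈ X, a j = b X) ∧
      (∀ S ⊆ X, ∑ j ∈ S, a j ≤ b S) ∧
      (∀ T : Finset ι, ∑ j ∈ T, a j ≤ b T) ∧
      (∀ T : Finset ι, (∑ j ∈ T, a j) - p T ≤ (∑ j ∈ X, a j) - p X) :=
  vcg_outcome_closure_xos_to_additive_general b hXOS p X hmax
end

section
/- In the two-agent six-item instance with subadditive valuations (items partitioned into X_1, X_2 with |X_1| = |X_2| = 3; agent i values: 12 on all of X_i, 6 on nonempty proper subsets of X_i, 5+ε on all of X_{i+1}, 4+2ε on 2-subsets of X_{i+1}, 3+3ε on singletons of X_{i+1}, and max of the two projections otherwise), the bid profile where each agent i bids 0 on subsets of X_i and his true values on subsets of X_{i+1} is a conservative pure Nash equilibrium of the VCG mechanism, and its welfare is 10+2ε while the optimal welfare is 24; hence the Price of Anarchy with respect to pure Nash equilibria for subadditive valuations and XOS bids is at least 2.4 - δ for every δ > 0 (choosing ε small). -/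
/-- The two bundles of three items each: `X 0 = {0,1,2}`, `X 1 = {3,4,5}`. -/
def Xset (i : Fin 2) : Finset (Fin 6) :=
  if i = 0 then {0, 1, 2} else {3, 4, 5}

/-- Valuation for subsets of the agent's own bundle. -/
noncomputable def vOwn (S : Finset (Fin 6)) : ℝ :=
  if S.card = 3 then 12 else if 1 ≤ S.card then 6 else 0

/-- Valuation for subsets of the other agent's bundle. -/
noncomputable def vOth (ε : ℝ) (S : Finset (Fin 6)) : ℝ :=
  if S.card = 3 then 5 + ε else if S.card = 2 then 4 + 2 * ε
  else if S.card = 1 then 3 + 3 * ε else 0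

/-- The valuation of agent `i` (indices mod 2). -/
noncomputable def val (ε : ℝ) (i : Fin 2) (S : Finset (Fin 6)) : ℝ :=
  max (vOwn (S ∩ Xset i)) (vOth ε (S ∩ Xset (i + 1)))

/-- The equilibrium bid of agent `i`: zero on own bundle, true values on the
other agent's bundle. -/
noncomputable def bid (ε : ℝ) (i : Fin 2) (S : Finset (Fin 6)) : ℝ :=
  vOth ε (S ∩ Xset (i + 1))

/-- The bundle of agent `i` in the allocation encoded by `g`. -/
def part2 (g : Fin 6 → Fin 2) (i : Fin 2) : Finset (Fin 6) :=
  Finset.univ.filter (fun j => g j = i)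


/-! In the equilibrium each agent wins the other's bundle, so welfare is `2(5 + ε)` against the
optimum `24`. For a bundle `S` agent `i` pays `(5 + ε) - vOth (X_i \ S)`. If `S` misses an item of
`X_i`, its value on `X_i` is at most `6` and the refund `vOth (X_i \ S)` makes up the difference, so
the utility stays at most `5 + ε`. Winning all of `X_i` is impossible for a conservative XOS bid:
giving any item of `X_i` to the opponent would add `3 + 3ε` to the opponent's bid, so bid-maximality
forces that item to weigh at least `3 + 3ε` in a clause supporting `S`, while conservativeness caps
the weight of any two items of `X_i` at `val {j, k} = 6`. -/

section XOS

open Finset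

variable {ι : Type*} {c : Finset ι → ℝ}

structure IsSupportingClause (c : Finset ι → ℝ) (S : Finset ι) (a : ι → ℝ) : Prop where
  nonneg : ∀ j, 0 ≤ a j
  sum_eq : ∑ j ∈ S, a j = c S
  sum_le : ∀ T, ∑ j ∈ T, a j ≤ c T

theorem IsXOS.exists_isSupportingClause (hc : IsXOS c) (S : Finset ι) :
    ∃ a, IsSupportingClause c S a := by
  obtain ⟨A, hA, hnonneg, hsup⟩ := hc
  obtain ⟨a, haA, ha⟩ := A.exists_mem_eq_sup' hA fun a => ∑ j ∈ S, a j
  exact ⟨a, hnonneg a haA, by rw [hsup, ha],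
    fun T => hsup T ▸ A.le_sup' (fun a => ∑ j ∈ T, a j) haA⟩

theorem isXOS_of_forall_exists_isSupportingClause [Fintype ι]
    (h : ∀ S, ∃ a, IsSupportingClause c S a) : IsXOS c := by
  classical
  choose a ha using h
  refine ⟨univ.image a, univ_nonempty.image a, ?_, fun S => le_antisymm ?_ ?_⟩
  · simpa using fun S => (ha S).nonneg
  · exact (ha S).sum_eq ▸ le_sup' (fun b => ∑ j ∈ S, b j) (mem_image_of_mem a (mem_univ S))
  · exact sup'_le _ _ (by simpa using fun T => (ha T).sum_le S)

theorem IsSupportingClause.sub_erase_le [DecidableEq ι] {S : Finset ι} {a : ι → ℝ}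
    (h : IsSupportingClause c S a) {j : ι} (hj : j ∈ S) : c S - c (S.erase j) ≤ a j := by
  have := h.sum_le (S.erase j)
  rw [← h.sum_eq, ← add_sum_erase S a hj]
  linarith

/-- The clause supporting `S` spreads `v (S ∩ X)` uniformly over `S ∩ X`. -/
theorem isXOS_comp_inter [Fintype ι] [DecidableEq ι] {v : Finset ι → ℝ} (X : Finset ι)
    (hv₀ : v ∅ = 0) (hmono : ∀ A B, A ⊆ B → B ⊆ X → v A ≤ v B)
    (havg : ∀ A B, A ⊆ B → B ⊆ X → (#A : ℝ) * v B ≤ #B * v A) :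
    IsXOS fun S => v (S ∩ X) := by
  have hnonneg : ∀ A ⊆ X, 0 ≤ v A := fun A hA => hv₀ ▸ hmono ∅ A (empty_subset A) hA
  refine isXOS_of_forall_exists_isSupportingClause fun S => ?_
  set U := S ∩ X
  have hUX : U ⊆ X := inter_subset_right
  have hsum : ∀ T, ∑ j ∈ T, (if j ∈ U then v U / #U else 0) = #(T ∩ U) * (v U / #U) := by
    intro T
    rw [sum_ite_mem, sum_const, nsmul_eq_mul]
  refine ⟨fun j => if j ∈ U then v U / #U else 0, fun j => ?_, ?_, fun T => ?_⟩
  · split_ifs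
    exacts [div_nonneg (hnonneg U hUX) (Nat.cast_nonneg _), le_rfl]
  · rw [hsum, inter_eq_right.mpr inter_subset_left]
    rcases U.eq_empty_or_nonempty with hU | hU
    · rw [show S ∩ X = U from rfl, hU]
      simp [hv₀]
    · exact mul_div_cancel₀ _ (Nat.cast_ne_zero.mpr hU.card_pos.ne')
  · rw [hsum]
    set W := T ∩ U
    have hWU : W ⊆ U := inter_subset_right
    have hWX : W ⊆ T ∩ X := inter_subset_inter_left hUX
    rcases W.eq_empty_or_nonempty with hW | hW
    · simpa [hW] using hnonneg _ inter_subset_right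
    calc (#W : ℝ) * (v U / #U) ≤ v W := by
          rw [← mul_div_assoc, div_le_iff₀ (by exact_mod_cast (hW.mono hWU).card_pos), mul_comm (v W)]
          exact havg W U hWU hUX
      _ ≤ v (T ∩ X) := hmono W _ hWX inter_subset_right

end XOS

section Instance

open Finset hiding val

variable {ε : ℝ}

theorem Fin.two_add_one_add_one (i : Fin 2) : i + 1 + 1 = i := by fin_cases i <;> rfl

theorem card_Xset (i : Fin 2) : #(Xset i) = 3 := by fin_cases i <;> rfl

theorem disjoint_Xset_add_one (i : Fin 2) : Disjoint (Xset i) (Xset (i + 1)) := by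
  fin_cases i <;> decide

theorem vOwn_nonneg (S : Finset (Fin 6)) : 0 ≤ vOwn S := by
  unfold vOwn; split_ifs <;> norm_num

theorem vOwn_le_twelve (S : Finset (Fin 6)) : vOwn S ≤ 12 := by
  unfold vOwn; split_ifs <;> norm_num

theorem vOwn_union_le (A B : Finset (Fin 6)) : vOwn (A ∪ B) ≤ vOwn A + vOwn B := by
  have := card_union_le A B
  have := card_le_card (subset_union_left : A ⊆ A ∪ B)
  have := card_le_card (subset_union_right : B ⊆ A ∪ B)
  unfold vOwn; split_ifs <;> first | omega | norm_num

theorem vOth_empty : vOth ε ∅ = 0 := by simp [vOth]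

theorem vOth_of_card_eq_one {S : Finset (Fin 6)} (h : #S = 1) : vOth ε S = 3 + 3 * ε := by
  simp [vOth, h]

theorem vOth_of_card_eq_three {S : Finset (Fin 6)} (h : #S = 3) : vOth ε S = 5 + ε := by
  simp [vOth, h]

theorem vOth_nonneg (hε : 0 ≤ ε) (S : Finset (Fin 6)) : 0 ≤ vOth ε S := by
  unfold vOth; split_ifs <;> linarith

theorem vOth_le (hε₀ : 0 ≤ ε) (hε₁ : ε ≤ 1) (S : Finset (Fin 6)) : vOth ε S ≤ 5 + ε := by
  unfold vOth; split_ifs <;> linarith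

theorem vOth_union_le (hε : 0 ≤ ε) (A B : Finset (Fin 6)) :
    vOth ε (A ∪ B) ≤ vOth ε A + vOth ε B := by
  have := card_union_le A B
  have := card_le_card (subset_union_left : A ⊆ A ∪ B)
  have := card_le_card (subset_union_right : B ⊆ A ∪ B)
  unfold vOth; split_ifs <;> first | omega | linarith

theorem vOth_mono (hε₀ : 0 ≤ ε) (hε₁ : ε ≤ 1) {A B : Finset (Fin 6)} (hAB : A ⊆ B) (hB : #B ≤ 3) :
    vOth ε A ≤ vOth ε B := by
  have := card_le_card hAB
  unfold vOth; split_ifs <;> first | omega | linarith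

theorem card_mul_vOth_le (hε : 0 ≤ ε) {A B : Finset (Fin 6)} (hAB : A ⊆ B) (hB : #B ≤ 3) :
    (#A : ℝ) * vOth ε B ≤ #B * vOth ε A := by
  have := card_le_card hAB
  unfold vOth
  generalize #A = a at *
  generalize #B = b at *
  interval_cases b <;> interval_cases a <;> norm_num <;> linarith

theorem isXOS_bid (hε₀ : 0 ≤ ε) (hε₁ : ε ≤ 1) (i : Fin 2) : IsXOS (bid ε i) :=
  have hcard {B} (hB : B ⊆ Xset (i + 1)) : #B ≤ 3 := card_Xset (i + 1) ▸ card_le_card hB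
  isXOS_comp_inter (Xset (i + 1)) vOth_empty (fun _ _ hAB hB => vOth_mono hε₀ hε₁ hAB (hcard hB))
    fun _ _ hAB hB => card_mul_vOth_le hε₀ hAB (hcard hB)

theorem bid_le_val (i : Fin 2) (S : Finset (Fin 6)) : bid ε i S ≤ val ε i S := le_max_right _ _

theorem bid_le (hε₀ : 0 ≤ ε) (hε₁ : ε ≤ 1) (i : Fin 2) (S : Finset (Fin 6)) : bid ε i S ≤ 5 + ε :=
  vOth_le hε₀ hε₁ _

theorem bid_Xset_add_one (i : Fin 2) : bid ε i (Xset (i + 1)) = 5 + ε := by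
  rw [bid, inter_self, vOth_of_card_eq_three (card_Xset _)]

theorem bid_add_one_compl (i : Fin 2) (T : Finset (Fin 6)) :
    bid ε (i + 1) (univ \ T) = vOth ε (Xset i \ T) := by
  rw [bid, Fin.two_add_one_add_one, sdiff_inter_right_comm, univ_inter]

theorem val_union_le (hε : 0 ≤ ε) (i : Fin 2) (S T : Finset (Fin 6)) :
    val ε i (S ∪ T) ≤ val ε i S + val ε i T := by
  unfold val
  rw [union_inter_distrib_right, union_inter_distrib_right]
  exact max_le ((vOwn_union_le _ _).trans (add_le_add (le_max_left _ _) (le_max_left _ _)))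
    ((vOth_union_le hε _ _).trans (add_le_add (le_max_right _ _) (le_max_right _ _)))

theorem val_le_twelve (hε₀ : 0 ≤ ε) (hε₁ : ε ≤ 1) (i : Fin 2) (S : Finset (Fin 6)) :
    val ε i S ≤ 12 :=
  max_le (vOwn_le_twelve _) ((vOth_le hε₀ hε₁ _).trans (by linarith))

theorem val_of_subset_Xset {i : Fin 2} {T : Finset (Fin 6)} (hT : T ⊆ Xset i) :
    val ε i T = vOwn T := by
  rw [val, inter_eq_left.mpr hT, disjoint_iff_inter_eq_empty.mp
    ((disjoint_Xset_add_one i).mono_left hT), vOth_empty]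
  exact max_eq_left (vOwn_nonneg T)

theorem val_of_subset_Xset_add_one (hε : 0 ≤ ε) {i : Fin 2} {T : Finset (Fin 6)}
    (hT : T ⊆ Xset (i + 1)) : val ε i T = vOth ε T := by
  rw [val, inter_eq_left.mpr hT, disjoint_iff_inter_eq_empty.mp
    ((disjoint_Xset_add_one i).symm.mono_left hT)]
  exact max_eq_right (by simpa [vOwn] using vOth_nonneg hε T)

theorem val_Xset (i : Fin 2) : val ε i (Xset i) = 12 := by
  simp [val_of_subset_Xset subset_rfl, vOwn, card_Xset]

theorem val_Xset_add_one (hε : 0 ≤ ε) (i : Fin 2) : val ε i (Xset (i + 1)) = 5 + ε := by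
  rw [val_of_subset_Xset_add_one hε subset_rfl, vOth_of_card_eq_three (card_Xset _)]

theorem part2_add_one (g : Fin 6 → Fin 2) (i : Fin 2) : part2 g (i + 1) = univ \ part2 g i := by
  ext j
  simp only [part2, mem_filter, mem_univ, true_and, mem_sdiff]
  fin_cases i <;> generalize g j = k <;> fin_cases k <;> decide

theorem exists_part2_eq (i : Fin 2) (T : Finset (Fin 6)) : ∃ g, part2 g i = T :=
  ⟨fun j => if j ∈ T then i else i + 1, by
    ext j
    by_cases hj : j ∈ T <;> simp [part2, hj]⟩

/-- `hmax` is bid-maximality of `S` against the other agent's equilibrium bid, which values the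
complement `univ \ T` at `vOth ε (Xset i \ T)`. -/
theorem not_Xset_subset_of_isMax (hε : 0 < ε) {i : Fin 2} {c : Finset (Fin 6) → ℝ}
    (hc : IsXOS c) (hcons : ∀ S, c S ≤ val ε i S) {S : Finset (Fin 6)}
    (hmax : ∀ T, c T + vOth ε (Xset i \ T) ≤ c S + vOth ε (Xset i \ S)) : ¬ Xset i ⊆ S := by
  intro hXS
  obtain ⟨a, ha⟩ := hc.exists_isSupportingClause S
  have hmarginal : ∀ j ∈ Xset i, 3 + 3 * ε ≤ a j := by
    intro j hj
    have := hmax (S.erase j)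
    rw [sdiff_erase hj, sdiff_eq_empty_iff_subset.mpr hXS, insert_empty, vOth_empty,
      vOth_of_card_eq_one (card_singleton j)] at this
    linarith [ha.sub_erase_le (hXS hj)]
  obtain ⟨j, hj, k, hk, hjk⟩ := one_lt_card.mp (by rw [card_Xset]; norm_num : 1 < #(Xset i))
  have hpair : a j + a k ≤ 6 :=
    calc a j + a k = ∑ l ∈ {j, k}, a l := (sum_pair hjk).symm
      _ ≤ c {j, k} := ha.sum_le _
      _ ≤ val ε i {j, k} := hcons _
      _ = 6 := by
        rw [val_of_subset_Xset (insert_subset hj (singleton_subset_iff.mpr hk))]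
        simp [vOwn, card_pair hjk]
  linarith [hmarginal j hj, hmarginal k hk]

theorem val_add_vOth_sdiff_le (hε₀ : 0 ≤ ε) (hε₁ : ε ≤ 1) {i : Fin 2} {S : Finset (Fin 6)}
    (hS : ¬ Xset i ⊆ S) : val ε i S + vOth ε (Xset i \ S) ≤ 10 + 2 * ε := by
  rw [val, max_add]
  refine max_le ?_ (by linarith [vOth_le hε₀ hε₁ (S ∩ Xset (i + 1)), vOth_le hε₀ hε₁ (Xset i \ S)])
  have hcard := card_sdiff_add_card_inter (Xset i) S
  have hpos := (sdiff_nonempty.mpr hS).card_pos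
  rw [inter_comm, card_Xset] at hcard
  unfold vOwn vOth
  split_ifs <;> first | omega | linarith

theorem vcg_utility_le (hε₀ : 0 < ε) (hε₁ : ε ≤ 1) (i : Fin 2) (c : Finset (Fin 6) → ℝ)
    (hc : IsXOS c) (hcons : ∀ S, c S ≤ val ε i S) (g : Fin 6 → Fin 2)
    (hmax : ∀ g' : Fin 6 → Fin 2, c (part2 g' i) + bid ε (i + 1) (part2 g' (i + 1)) ≤
      c (part2 g i) + bid ε (i + 1) (part2 g (i + 1))) :
    val ε i (part2 g i) - (bid ε (i + 1) univ - bid ε (i + 1) (univ \ part2 g i)) ≤ 5 + ε := by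
  have hmax' : ∀ T, c T + vOth ε (Xset i \ T) ≤
      c (part2 g i) + vOth ε (Xset i \ part2 g i) := by
    intro T
    obtain ⟨g', rfl⟩ := exists_part2_eq i T
    simpa only [part2_add_one, bid_add_one_compl] using hmax g'
  have := val_add_vOth_sdiff_le hε₀.le hε₁ (not_Xset_subset_of_isMax hε₀ hc hcons hmax')
  have huniv := bid_add_one_compl (ε := ε) i ∅
  rw [sdiff_empty, sdiff_empty, vOth_of_card_eq_three (card_Xset i)] at huniv
  rw [huniv, bid_add_one_compl]
  linarith

end Instance

/-- In the two-agent six-item instance the valuations are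
subadditive, the bids are conservative XOS bids forming a pure Nash equilibrium
of the VCG mechanism, its welfare is `10 + 2ε` while the optimum is `24`, so the
Price of Anarchy for subadditive valuations and XOS bids is at least `2.4 - δ`
for every `δ > 0` (choosing `ε` small). -/
theorem poa_lower_bound_oxs_subadditive :
    ∀ δ : ℝ, 0 < δ → ∃ ε : ℝ, 0 < ε ∧
      -- the valuations are subadditive
      (∀ (i : Fin 2) (S T : Finset (Fin 6)),
        val ε i (S ∪ T) ≤ val ε i S + val ε i T) ∧
      -- the bids are XOS and conservative
      (∀ i : Fin 2, IsXOS (bid ε i)) ∧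
      (∀ (i : Fin 2) (S : Finset (Fin 6)), bid ε i S ≤ val ε i S) ∧
      -- the allocation giving `Xset (i+1)` to agent `i` is bid-maximizing
      (∀ g : Fin 6 → Fin 2,
        bid ε 0 (part2 g 0) + bid ε 1 (part2 g 1) ≤
          bid ε 0 (Xset 1) + bid ε 1 (Xset 0)) ∧
      -- equilibrium welfare is 10 + 2ε
      (val ε 0 (Xset 1) + val ε 1 (Xset 0) = 10 + 2 * ε) ∧
      -- optimal welfare is 24
      IsGreatest {w : ℝ | ∃ g : Fin 6 → Fin 2,
        w = val ε 0 (part2 g 0) + val ε 1 (part2 g 1)} 24 ∧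
      -- pure Nash equilibrium: any conservative XOS deviation of agent `i`,
      -- under any resulting bid-maximizing VCG allocation, yields utility at
      -- most the equilibrium utility `5 + ε`
      (∀ (i : Fin 2) (c : Finset (Fin 6) → ℝ), IsXOS c →
        (∀ S, c S ≤ val ε i S) →
        ∀ g : Fin 6 → Fin 2,
          (∀ g' : Fin 6 → Fin 2,
            c (part2 g' i) + bid ε (i + 1) (part2 g' (i + 1)) ≤
              c (part2 g i) + bid ε (i + 1) (part2 g (i + 1))) →
          val ε i (part2 g i) -
              (bid ε (i + 1) Finset.univ -
                bid ε (i + 1) (Finset.univ \ part2 g i)) ≤ 5 + ε) ∧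
      -- hence the Price of Anarchy is at least 2.4 - δ
      2.4 - δ ≤ 24 / (10 + 2 * ε) := by
  intro δ hδ
  set ε := min δ 1
  have hε₀ : 0 < ε := lt_min hδ one_pos
  have hεδ : ε ≤ δ := min_le_left δ 1
  have hε₁ : ε ≤ 1 := min_le_right δ 1
  have hval₀ : val ε 0 (Xset 1) = 5 + ε := val_Xset_add_one hε₀.le 0
  have hval₁ : val ε 1 (Xset 0) = 5 + ε := val_Xset_add_one hε₀.le 1
  have hbid₀ : bid ε 0 (Xset 1) = 5 + ε := bid_Xset_add_one 0
  have hbid₁ : bid ε 1 (Xset 0) = 5 + ε := bid_Xset_add_one 1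
  refine ⟨ε, hε₀, val_union_le hε₀.le, isXOS_bid hε₀.le hε₁, bid_le_val,
    fun g => ?_, ?_, ⟨⟨fun j => if j ∈ Xset 0 then 0 else 1, ?_⟩, ?_⟩,
    vcg_utility_le hε₀ hε₁, ?_⟩
  · linarith [bid_le hε₀.le hε₁ 0 (part2 g 0), bid_le hε₀.le hε₁ 1 (part2 g 1)]
  · rw [hval₀, hval₁]
    ring
  · rw [show part2 (fun j => if j ∈ Xset 0 then 0 else 1) 0 = Xset 0 by decide,
      show part2 (fun j => if j ∈ Xset 0 then 0 else 1) 1 = Xset 1 by decide, val_Xset, val_Xset]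
    norm_num
  · rintro w ⟨g, rfl⟩
    linarith [val_le_twelve hε₀.le hε₁ 0 (part2 g 0), val_le_twelve hε₀.le hε₁ 1 (part2 g 1)]
  · rw [le_div_iff₀ (by linarith)]
    nlinarith [mul_pos hδ hε₀]
end

section
/- Every normalized monotone subadditive set function on m items is ⌈log₂ m⌉-fractionally subadditive (for m ≥ 2): for every T ⊆ M there exists an additive function a with Σ_{j∈T} a(j) ≥ v(T)/⌈log₂ m⌉ and Σ_{j∈S} a(j) ≤ v(S) for all S ⊆ T. -/
/-!
Greedy pricing, as in the analysis of greedy set cover: pick a nonempty `B ⊆ R` of least average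
value `v B / |B|`, give every item of `B` the price `v B / |B|`, and recurse on `R \ B`.
Subadditivity makes the prices on `T` add up to at least `v T`. For `C ⊆ T`, each round charges
the items of `C` removed in that round at most `v C / |C ∩ R|` apiece, since `C ∩ R` was a
candidate for `B`; so `C` is charged at most `H(|C|) v C`, and dividing the prices by
`H(m) ≤ ⌈log₂ m⌉` (valid for `m ≥ 5`) gives the theorem. For `m ≤ 4` a set of at most two items
carries an exact additive minorant (its marginal values), and a set of at most four items splits
into two such sets, one of which has at least half its value.
-/

open Finset

theorem harmonic_add_sub_le (a b : ℕ) : harmonic (a + b) - harmonic a ≤ b / (a + 1) := by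
  induction b with
  | zero => simp
  | succ b ih =>
    have hterm : ((a + b + 1 : ℕ) : ℚ)⁻¹ ≤ 1 / (a + 1) := by
      rw [one_div]; gcongr; push_cast; linarith [(b.cast_nonneg : (0 : ℚ) ≤ b)]
    rw [← add_assoc, harmonic_succ]
    push_cast at hterm ⊢
    rw [add_div]
    linarith

theorem div_add_le_harmonic_add_sub (a b : ℕ) :
    (b : ℚ) / (a + b) ≤ harmonic (a + b) - harmonic a := by
  induction b with
  | zero => simp
  | succ b ih =>
    have hshrink : (b : ℚ) / (a + b + 1) ≤ b / (a + b) := by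
      rcases b.eq_zero_or_pos with rfl | hb
      · simp
      · exact div_le_div_of_nonneg_left b.cast_nonneg (by positivity) (by linarith)
    rw [← add_assoc, harmonic_succ]
    push_cast
    rw [add_div, ← add_assoc, inv_eq_one_div]
    linarith

theorem harmonic_mono : Monotone harmonic := by
  intro a c hac
  obtain ⟨b, rfl⟩ := Nat.exists_eq_add_of_le hac
  have hgap := div_add_le_harmonic_add_sub a b
  have hpos : (0 : ℚ) ≤ b / (a + b) := by positivity
  linarith

theorem harmonic_nonneg (n : ℕ) : 0 ≤ harmonic n :=
  harmonic_zero ▸ harmonic_mono n.zero_le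

theorem harmonic_two_pow_le {k : ℕ} (hk : 3 ≤ k) : harmonic (2 ^ k) ≤ k := by
  induction k, hk using Nat.le_induction with
  | base => norm_num [harmonic, sum_range_succ]
  | succ k _ ih =>
    have hdouble := harmonic_add_sub_le (2 ^ k) (2 ^ k)
    have hhalf : ((2 ^ k : ℕ) : ℚ) / ((2 ^ k : ℕ) + 1) ≤ 1 := by
      rw [div_le_one (by positivity)]; linarith
    rw [pow_succ, mul_two]
    push_cast at hdouble hhalf ih ⊢
    linarith

theorem harmonic_le_clog_two {n : ℕ} (hn : 5 ≤ n) : harmonic n ≤ Nat.clog 2 n := by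
  have hk : 3 ≤ Nat.clog 2 n := (Nat.lt_clog_iff_pow_lt one_lt_two).2 (by omega)
  exact (harmonic_mono (Nat.le_pow_clog one_lt_two n)).trans (harmonic_two_pow_le hk)

def FractionallySubadditiveAt {ι : Type*} (v : Finset ι → ℝ) (β : ℝ) (T : Finset ι) : Prop :=
  ∃ a : ι → ℝ, v T / β ≤ ∑ j ∈ T, a j ∧ ∀ S ⊆ T, ∑ j ∈ S, a j ≤ v S

section SetFunction

variable {ι : Type*} [DecidableEq ι] {v : Finset ι → ℝ}

theorem exists_harmonic_minorant (hnorm : v ∅ = 0) (hmono : Monotone v)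
    (hsub : ∀ S T, v (S ∪ T) ≤ v S + v T) (R : Finset ι) :
    ∃ a : ι → ℝ, v R ≤ ∑ j ∈ R, a j ∧ ∀ C ⊆ R, ∑ j ∈ C, a j ≤ harmonic #C * v C := by
  induction R using Finset.strongInduction with
  | H R ih =>
    rcases R.eq_empty_or_nonempty with rfl | hR
    · exact ⟨0, by simp [hnorm], fun C hC => by simp [subset_empty.1 hC, hnorm]⟩
    obtain ⟨B, hB, hBmin⟩ := exists_min_image (R.powerset.filter Finset.Nonempty)
      (fun S => v S / #S) ⟨R, by simp [hR]⟩
    simp only [mem_filter, mem_powerset, and_imp] at hB hBmin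
    obtain ⟨a', ha'R, ha'C⟩ := ih (R \ B) (sdiff_ssubset hB.1 hB.2)
    have hBcard : (#B : ℝ) ≠ 0 := by exact_mod_cast (card_pos.2 hB.2).ne'
    refine ⟨B.piecewise (fun _ => v B / #B) a', ?_, fun C hC => ?_⟩
    · calc v R = v (B ∪ (R \ B)) := by rw [union_sdiff_of_subset hB.1]
        _ ≤ v B + ∑ j ∈ R \ B, a' j := by linarith [hsub B (R \ B)]
        _ = _ := by
          rw [sum_piecewise, inter_eq_right.2 hB.1, sum_const, nsmul_eq_mul,
            mul_div_cancel₀ _ hBcard]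
    rw [sum_piecewise, sum_const, nsmul_eq_mul]
    rcases C.eq_empty_or_nonempty with rfl | hCne
    · simp
    have hdensity : v B / #B ≤ v C / #C := hBmin C hC hCne
    have hrest := ha'C (C \ B) (sdiff_subset_sdiff hC le_rfl)
    have hgap : (#(C ∩ B) : ℝ) / #C ≤ harmonic #C - harmonic #(C \ B) := by
      have h := div_add_le_harmonic_add_sub #(C \ B) #(C ∩ B)
      rw [← Nat.cast_add, add_comm, card_inter_add_card_sdiff] at h
      have hℝ := (Rat.cast_le (K := ℝ)).2 h
      push_cast at hℝ
      exact hℝ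
    have hH : (0 : ℝ) ≤ harmonic #(C \ B) := by
      exact_mod_cast harmonic_nonneg _
    calc #(C ∩ B) * (v B / #B) + ∑ j ∈ C \ B, a' j
        ≤ #(C ∩ B) * (v C / #C) + harmonic #(C \ B) * v C := by
          gcongr
          exact hrest.trans (mul_le_mul_of_nonneg_left (hmono sdiff_subset) hH)
      _ = #(C ∩ B) / #C * v C + harmonic #(C \ B) * v C := by ring
      _ ≤ (harmonic #C - harmonic #(C \ B)) * v C + harmonic #(C \ B) * v C := by
          gcongr; exact hnorm ▸ hmono (empty_subset C)
      _ = harmonic #C * v C := by ring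

theorem fractionallySubadditiveAt_of_harmonic_le (hnorm : v ∅ = 0) (hmono : Monotone v)
    (hsub : ∀ S T, v (S ∪ T) ≤ v S + v T) {β : ℝ} {T : Finset ι} (hβ : harmonic #T ≤ β)
    (hβpos : 0 < β) : FractionallySubadditiveAt v β T := by
  obtain ⟨a, haT, haC⟩ := exists_harmonic_minorant hnorm hmono hsub T
  refine ⟨fun j => a j / β, by rw [← sum_div]; gcongr, fun S hS => ?_⟩
  have hHS : (harmonic #S : ℝ) ≤ β :=
    le_trans (by exact_mod_cast harmonic_mono (card_le_card hS)) hβ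
  rw [← sum_div, div_le_iff₀' hβpos]
  calc ∑ j ∈ S, a j ≤ harmonic #S * v S := haC S hS
    _ ≤ β * v S := by gcongr; exact hnorm ▸ hmono (empty_subset S)

theorem fractionallySubadditiveAt_one_of_card_le_two (hnorm : v ∅ = 0)
    (hsub : ∀ S T, v (S ∪ T) ≤ v S + v T) {P : Finset ι} (hP : #P ≤ 2) :
    FractionallySubadditiveAt v 1 P := by
  interval_cases h : #P
  · rw [card_eq_zero] at h
    subst h
    exact ⟨0, by simp [hnorm], fun S hS => by simp [subset_empty.1 hS, hnorm]⟩
  · obtain ⟨x, rfl⟩ := card_eq_one.1 h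
    refine ⟨fun _ => v {x}, by simp, fun S hS => ?_⟩
    rcases subset_singleton_iff.1 hS with rfl | rfl <;> simp [hnorm]
  · obtain ⟨x, y, hxy, rfl⟩ := card_eq_two.1 h
    have hy : v {x, y} - v {x} ≤ v {y} := by linarith [insert_eq x {y} ▸ hsub {x} {y}]
    refine ⟨fun j => if j = x then v {x} else v {x, y} - v {x},
      by simp [sum_pair hxy, hxy.symm], fun S hS => ?_⟩
    have hS' : S = ∅ ∨ S = {y} ∨ {x} = S ∨ {x, y} = S := by
      simpa [powerset_insert, or_assoc] using mem_powerset.2 hS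
    rcases hS' with rfl | rfl | rfl | rfl <;> simp [hnorm, hxy.symm, sum_pair hxy, hy]

theorem FractionallySubadditiveAt.of_subset (hmono : Monotone v) {β β' : ℝ} {P T : Finset ι}
    (hPT : P ⊆ T) (hP : FractionallySubadditiveAt v β P) (hvT : v T / β' ≤ v P / β) :
    FractionallySubadditiveAt v β' T := by
  obtain ⟨a, haP, haS⟩ := hP
  refine ⟨fun j => if j ∈ P then a j else 0, ?_, fun S _ => ?_⟩
  · rw [sum_ite_mem, inter_eq_right.2 hPT]
    exact hvT.trans haP
  · rw [sum_ite_mem]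
    exact (haS _ inter_subset_right).trans (hmono inter_subset_left)

theorem fractionallySubadditiveAt_two_of_card_le_four (hnorm : v ∅ = 0) (hmono : Monotone v)
    (hsub : ∀ S T, v (S ∪ T) ≤ v S + v T) {T : Finset ι} (hT : #T ≤ 4) :
    FractionallySubadditiveAt v 2 T := by
  obtain ⟨P, hPT, hP⟩ := exists_subset_card_eq (Nat.div_le_self #T 2)
  have hQ : #(T \ P) ≤ 2 := by rw [card_sdiff_of_subset hPT]; omega
  have hsplit : v T ≤ v P + v (T \ P) := by
    simpa [union_sdiff_of_subset hPT] using hsub P (T \ P)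
  rcases le_total (v P) (v (T \ P)) with hle | hle
  · exact (fractionallySubadditiveAt_one_of_card_le_two hnorm hsub hQ).of_subset hmono
      sdiff_subset (by linarith)
  · exact (fractionallySubadditiveAt_one_of_card_le_two hnorm hsub (by omega)).of_subset hmono
      hPT (by linarith)

end SetFunction

theorem subadditive_is_log_fractionally_subadditive_general {ι : Type*} [Fintype ι]
    [DecidableEq ι] (hm : 2 ≤ Fintype.card ι)
    (v : Finset ι → ℝ)
    (hnorm : v ∅ = 0)
    (hmono : ∀ S T : Finset ι, S ⊆ T → v S ≤ v T)
    (hsub : ∀ S T : Finset ι, v (S ∪ T) ≤ v S + v T) :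
    ∀ T : Finset ι, ∃ a : ι → ℝ,
      v T / (Nat.clog 2 (Fintype.card ι) : ℝ) ≤ ∑ j ∈ T, a j ∧
      ∀ S ⊆ T, ∑ j ∈ S, a j ≤ v S := by
  intro T
  have hT : #T ≤ Fintype.card ι := card_le_univ T
  rcases le_or_gt 5 (Fintype.card ι) with hm5 | hm4
  · refine fractionallySubadditiveAt_of_harmonic_le hnorm hmono hsub ?_ ?_
    · exact_mod_cast (harmonic_mono hT).trans (harmonic_le_clog_two hm5)
    · exact_mod_cast Nat.clog_pos one_lt_two hm
  interval_cases h : Fintype.card ι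
  · rw [show Nat.clog 2 2 = 1 by decide, Nat.cast_one]
    exact fractionallySubadditiveAt_one_of_card_le_two hnorm hsub hT
  · rw [show Nat.clog 2 3 = 2 by decide, Nat.cast_two]
    exact fractionallySubadditiveAt_two_of_card_le_four hnorm hmono hsub (by omega)
  · rw [show Nat.clog 2 4 = 2 by decide, Nat.cast_two]
    exact fractionallySubadditiveAt_two_of_card_le_four hnorm hmono hsub hT

/-- Every normalized monotone subadditive set function on `m ≥ 2`
items is `⌈log₂ m⌉`-fractionally subadditive: for every `T` there is an additive
minorant on subsets of `T` capturing at least a `1/⌈log₂ m⌉` fraction of `v T`. -/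
theorem subadditive_is_log_fractionally_subadditive {ι : Type*} [Fintype ι]
    [DecidableEq ι] (hm : 2 ≤ Fintype.card ι)
    (v : Finset ι → ℝ)
    (hnn : ∀ S, 0 ≤ v S)
    (hnorm : v ∅ = 0)
    (hmono : ∀ S T : Finset ι, S ⊆ T → v S ≤ v T)
    (hsub : ∀ S T : Finset ι, v (S ∪ T) ≤ v S + v T) :
    ∀ T : Finset ι, ∃ a : ι → ℝ,
      v T / (Nat.clog 2 (Fintype.card ι) : ℝ) ≤ ∑ j ∈ T, a j ∧
      ∀ S ⊆ T, ∑ j ∈ S, a j ≤ v S :=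
  subadditive_is_log_fractionally_subadditive_general hm v hnorm hmono hsub
end

section
/- Single-agent deviation bound for additive bids against random prices: Let v : 2^Q → ℝ≥0 be subadditive on a bundle Q, and let 𝒞 be a distribution over additive price vectors p on Q. For each p, let T(p) be a maximal subset of Q with v(T(p)) ≤ p(T(p)) and define the truncated price q_p by q_p(j) = p(j) for j ∈ Q \ T(p) and 0 otherwise; let 𝒟 be the induced distribution on truncated prices. For a bid b and prices p, let X(b,p) = {j ∈ Q : b(j) ≥ p(j)} denote winnings restricted to Q (ties broken in favor of b). Then there exists a bid a in the support of 𝒟 (hence conservative) such that E_{p∼𝒞}[v(X(a,p)) - p(X(a,p))] ≥ v(Q)/2 - E_{p∼𝒞}[p(Q)]. -/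
/-- The truncated price vector: equal to `price p` on `Q \ T p` and zero elsewhere. -/
noncomputable def trunc {ι P : Type*} [DecidableEq ι]
    (Q : Finset ι) (T : P → Finset ι) (price : P → ι → ℝ) (p : P) (j : ι) : ℝ :=
  if j ∈ Q \ T p then price p j else 0

/-- The winnings in `Q` of a bid `a` against item prices `pr` (ties in favor of
the bid). -/
noncomputable def wins {ι : Type*} (Q : Finset ι) (a pr : ι → ℝ) : Finset ι :=
  Q.filter (fun j => pr j ≤ a j)

/-!
Draw a bid `q` and prices `p` independently from `𝒞`, and let `X q p` be what the truncated
bid `trunc q` wins against `p`. Subadditivity, `v (T p) ≤ p (T p)` and the fact that a bid pays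
at most its own total give `v (X q p ∪ T p) + q_p(Q) ≤ v (X q p) - p (X q p) + p(Q) + q_q(Q)`.
On an item outside `T p ∪ T q` the truncated prices are the prices themselves, so the item is
won by `trunc q` against `p` or by `trunc p` against `q`: the sets `X q p ∪ T p` and
`X p q ∪ T q` cover `Q`, and averaging over the symmetric pair `(q, p)` gives
`E[v (X q p ∪ T p)] ≥ v Q / 2`. The truncated price totals cancel in expectation, and some `q`
of positive weight does at least as well as the average.
-/

open Finset

section WeightedAverage

variable {P : Type*} [Fintype P] {w : P → ℝ}

theorem exists_pos_weight_le_of_le_sum_mul (hw : ∀ p, 0 ≤ w p) (hw1 : ∑ p, w p = 1)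
    {c : ℝ} {g : P → ℝ} (h : c ≤ ∑ p, w p * g p) : ∃ p, 0 < w p ∧ c ≤ g p := by
  have hpos : ∀ p ∈ univ, ∀ a : ℝ, w p * a ≠ 0 → 0 < w p := fun p _ a hp =>
    (hw p).lt_of_ne (left_ne_zero_of_mul hp).symm
  have hs : (univ.filter fun p => 0 < w p).Nonempty := by
    obtain ⟨p, -, hp⟩ := exists_ne_zero_of_sum_ne_zero (hw1.trans_ne one_ne_zero)
    exact ⟨p, mem_filter.2 ⟨mem_univ p, (hw p).lt_of_ne (Ne.symm hp)⟩⟩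
  have hle : ∑ p ∈ univ.filter (fun p => 0 < w p), w p * c ≤
      ∑ p ∈ univ.filter (fun p => 0 < w p), w p * g p := by
    rwa [sum_filter_of_ne fun p hp => hpos p hp c, sum_filter_of_ne fun p hp => hpos p hp (g p),
      ← sum_mul, hw1, one_mul]
  obtain ⟨p, hps, hp⟩ := exists_le_of_sum_le hs hle
  have hwp : 0 < w p := (mem_filter.1 hps).2
  exact ⟨p, hwp, le_of_mul_le_mul_left hp hwp⟩

theorem sum_mul_sum_mul_add_sub (hw1 : ∑ p, w p = 1) (f : P → P → ℝ) (g : P → ℝ) :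
    ∑ q, w q * ∑ p, w p * (f q p + (g q - g p)) = ∑ q, w q * ∑ p, w p * f q p := by
  simp only [mul_add, sum_add_distrib, mul_sub, sum_sub_distrib, ← sum_mul, hw1, one_mul,
    sub_self, add_zero]

theorem half_le_sum_mul_sum_mul_of_le_add_swap (hw : ∀ p, 0 ≤ w p) (hw1 : ∑ p, w p = 1)
    {c : ℝ} {f : P → P → ℝ} (h : ∀ q p, c ≤ f q p + f p q) :
    c / 2 ≤ ∑ q, w q * ∑ p, w p * f q p := by
  have hswap : ∑ q, w q * ∑ p, w p * f p q = ∑ q, w q * ∑ p, w p * f q p := by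
    simp only [mul_sum]
    rw [sum_comm]
    exact sum_congr rfl fun q _ => sum_congr rfl fun p _ => by ring
  have hc : c ≤ ∑ q, w q * ∑ p, w p * (f q p + f p q) :=
    calc c = ∑ q, w q * ∑ p, w p * c := by simp only [← sum_mul, hw1, one_mul]
      _ ≤ _ := by gcongr with q _ p _ <;> [exact hw q; exact hw p; exact h q p]
  simp only [mul_add, sum_add_distrib, hswap] at hc
  linarith

end WeightedAverage

theorem sum_wins_le_sum_bid {ι : Type*} {Q : Finset ι} {a : ι → ℝ} (ha : ∀ j ∈ Q, 0 ≤ a j)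
    (pr : ι → ℝ) :
    ∑ j ∈ wins Q a pr, pr j ≤ ∑ j ∈ Q, a j :=
  calc ∑ j ∈ wins Q a pr, pr j ≤ ∑ j ∈ wins Q a pr, a j :=
        sum_le_sum fun _ hj => (mem_filter.1 hj).2
    _ ≤ ∑ j ∈ Q, a j :=
        sum_le_sum_of_subset_of_nonneg (filter_subset _ _) fun _ hj _ => ha _ hj

section Truncation

variable {ι P : Type*} [DecidableEq ι] {Q : Finset ι} {T : P → Finset ι} {price : P → ι → ℝ}

theorem trunc_nonneg {p : P} (hp : ∀ j, 0 ≤ price p j) (j : ι) :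
    0 ≤ trunc Q T price p j := by
  unfold trunc
  split_ifs
  exacts [hp j, le_rfl]

theorem sum_trunc_add_sum_price {p : P} (hTQ : T p ⊆ Q) :
    ∑ j ∈ Q, trunc Q T price p j + ∑ j ∈ T p, price p j = ∑ j ∈ Q, price p j := by
  simp only [trunc, sum_ite_mem, inter_eq_right.2 sdiff_subset, sum_sdiff hTQ]

theorem wins_trunc_union_wins_trunc_eq (hTQ : ∀ p, T p ⊆ Q) (p q : P) :
    (wins Q (trunc Q T price q) (price p) ∪ T p) ∪ (wins Q (trunc Q T price p) (price q) ∪ T q)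
      = Q := by
  refine Subset.antisymm (union_subset (union_subset (filter_subset _ _) (hTQ p))
    (union_subset (filter_subset _ _) (hTQ q))) fun j hj => ?_
  by_cases hp : j ∈ T p
  · simp [hp]
  by_cases hq : j ∈ T q
  · simp [hq]
  have := le_total (price p j) (price q j)
  simp_all [wins, trunc]

theorem v_wins_union_add_sum_trunc_le {v : Finset ι → ℝ}
    (hsub : ∀ S T : Finset ι, v (S ∪ T) ≤ v S + v T) {p q : P} (hq : ∀ j, 0 ≤ price q j)
    (hTQ : T p ⊆ Q) (hTle : v (T p) ≤ ∑ j ∈ T p, price p j) :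
    v (wins Q (trunc Q T price q) (price p) ∪ T p) + ∑ j ∈ Q, trunc Q T price p j ≤
      (v (wins Q (trunc Q T price q) (price p)) -
        ∑ j ∈ wins Q (trunc Q T price q) (price p), price p j) +
        ∑ j ∈ Q, price p j + ∑ j ∈ Q, trunc Q T price q j := by
  have hpay : ∑ j ∈ wins Q (trunc Q T price q) (price p), price p j ≤
      ∑ j ∈ Q, trunc Q T price q j :=
    sum_wins_le_sum_bid (fun j _ => trunc_nonneg hq j) (price p)
  linarith [hsub (wins Q (trunc Q T price q) (price p)) (T p),
    sum_trunc_add_sum_price (price := price) hTQ]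

end Truncation

theorem single_agent_deviation_bound_general {ι : Type*} [DecidableEq ι]
    (Q : Finset ι) (v : Finset ι → ℝ)
    (hsub : ∀ S T : Finset ι, v (S ∪ T) ≤ v S + v T)
    (P : Type*) [Fintype P] (w : P → ℝ)
    (hw : ∀ p, 0 ≤ w p) (hw1 : ∑ p, w p = 1)
    (price : P → ι → ℝ) (hpr : ∀ p j, 0 ≤ price p j)
    (T : P → Finset ι) (hTQ : ∀ p, T p ⊆ Q)
    (hTle : ∀ p, v (T p) ≤ ∑ j ∈ T p, price p j) :
    ∃ p₀ : P, 0 < w p₀ ∧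
      v Q / 2 - ∑ p, w p * ∑ j ∈ Q, price p j ≤
        ∑ p, w p * (v (wins Q (trunc Q T price p₀) (price p)) -
          ∑ j ∈ wins Q (trunc Q T price p₀) (price p), price p j) := by
  set X := fun q p => wins Q (trunc Q T price q) (price p)
  set utility := fun q p => v (X q p) - ∑ j ∈ X q p, price p j
  set bidTotal := fun q => ∑ j ∈ Q, trunc Q T price q j
  have hcover : v Q / 2 ≤ ∑ q, w q * ∑ p, w p * v (X q p ∪ T p) :=
    half_le_sum_mul_sum_mul_of_le_add_swap hw hw1 fun q p =>
      wins_trunc_union_wins_trunc_eq hTQ p q ▸ hsub _ _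
  have hdeviation : ∑ q, w q * ∑ p, w p * v (X q p ∪ T p) ≤
      ∑ q, w q * ∑ p, w p * ((utility q p + ∑ j ∈ Q, price p j) + (bidTotal q - bidTotal p)) := by
    gcongr with q _ p _
    · exact hw q
    · exact hw p
    · linarith [v_wins_union_add_sum_trunc_le hsub (hpr q) (hTQ p) (hTle p)]
  rw [sum_mul_sum_mul_add_sub hw1] at hdeviation
  obtain ⟨q, hq, hle⟩ := exists_pos_weight_le_of_le_sum_mul hw hw1 (hcover.trans hdeviation)
  simp only [mul_add, sum_add_distrib] at hle
  exact ⟨q, hq, by linarith⟩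

/-- Single-agent deviation bound for additive bids against random
prices. With `𝒞` a finitely supported distribution over additive price vectors,
`T p` a maximal subset of `Q` with `v (T p) ≤ price p (T p)`, and truncated prices
as bids, there is a bid `a = trunc p₀` in the support of the induced distribution
`𝒟` with `E_{p∼𝒞}[v(X(a,p)) - p(X(a,p))] ≥ v Q / 2 - E_{p∼𝒞}[p(Q)]`. -/
theorem single_agent_deviation_bound {ι : Type*} [DecidableEq ι]
    (Q : Finset ι) (v : Finset ι → ℝ)
    (hsub : ∀ S T : Finset ι, v (S ∪ T) ≤ v S + v T)
    (hnn : ∀ S, 0 ≤ v S)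
    (P : Type*) [Fintype P] (w : P → ℝ)
    (hw : ∀ p, 0 ≤ w p) (hw1 : ∑ p, w p = 1)
    (price : P → ι → ℝ) (hpr : ∀ p j, 0 ≤ price p j)
    (T : P → Finset ι) (hTQ : ∀ p, T p ⊆ Q)
    (hTle : ∀ p, v (T p) ≤ ∑ j ∈ T p, price p j)
    (hTmax : ∀ p, ∀ T', T p ⊆ T' → T' ⊆ Q →
      v T' ≤ ∑ j ∈ T', price p j → T' = T p) :
    ∃ p₀ : P, 0 < w p₀ ∧
      v Q / 2 - ∑ p, w p * ∑ j ∈ Q, price p j ≤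
        ∑ p, w p * (v (wins Q (trunc Q T price p₀) (price p)) -
          ∑ j ∈ wins Q (trunc Q T price p₀) (price p), price p j) :=
  single_agent_deviation_bound_general Q v hsub P w hw hw1 price hpr T hTQ hTle
end
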